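/- arXiv:2308.01039 — 4 statements merged into one kernel-verified Lean document; each statement's English description precedes it below -/
import Mathlib

section
/- For n ≥ 1, points x_1,…,x_n on the sphere of radius r_0 > 0 around the origin in R^d, and measures μ = n·δ_0 and ν = Σ_{i=1}^n δ_{x_i}, the flat distance satisfies ρ_F(μ,ν) = n·min{2, r_0}. -/
open MeasureTheory

noncomputable def flatDist {d : ℕ} (μ ν : Measure (EuclideanSpace ℝ (Fin d))) : ℝ :=
  sSup { r : ℝ | ∃ f : EuclideanSpace ℝ (Fin d) → ℝ,
    (∀ x, |f x| ≤ 1) ∧ LipschitzWith 1 f ∧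
    r = ∫ x, f x ∂μ - ∫ x, f x ∂ν }

theorem flatDist_dirac_sphereCombination {d n : ℕ} (hn : 1 ≤ n) (r₀ : ℝ) (hr₀ : 0 < r₀)
    (x : Fin n → EuclideanSpace ℝ (Fin d)) (hx : ∀ i, ‖x i‖ = r₀) :
    flatDist ((n : ENNReal) • Measure.dirac (0 : EuclideanSpace ℝ (Fin d)))
      (∑ i, Measure.dirac (x i)) = n * min 2 r₀ := by
  classical
  -- general integral computation
  have key : ∀ f : EuclideanSpace ℝ (Fin d) → ℝ, (∀ y, |f y| ≤ 1) → LipschitzWith 1 f →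
      (∫ y, f y ∂((n : ENNReal) • Measure.dirac (0 : EuclideanSpace ℝ (Fin d)))
        - ∫ y, f y ∂(∑ i, Measure.dirac (x i)))
      = ∑ i : Fin n, (f 0 - f (x i)) := by
    intro f hb hl
    have hint : ∀ i : Fin n, Integrable f (Measure.dirac (x i)) := fun i =>
      (integrable_const (1 : ℝ)).mono' hl.continuous.aestronglyMeasurable
        (Filter.Eventually.of_forall fun y => by simpa using hb y)
    rw [integral_smul_measure, integral_finset_sum_measure (fun i _ => hint i)]
    simp [integral_dirac, Finset.sum_sub_distrib, mul_comm]
  have habs : ∀ f : EuclideanSpace ℝ (Fin d) → ℝ, (∀ y, |f y| ≤ 1) → LipschitzWith 1 f →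
      ∀ i : Fin n, f 0 - f (x i) ≤ min 2 r₀ := by
    intro f hb hl i
    refine le_min ?_ ?_
    · have h1 := (abs_le.1 (hb 0)).2
      have h2 := (abs_le.1 (hb (x i))).1
      linarith
    · have := hl.dist_le_mul 0 (x i)
      have h3 : dist (f 0) (f (x i)) ≤ r₀ := by
        simpa [dist_eq_norm, hx i] using this
      calc f 0 - f (x i) ≤ |f 0 - f (x i)| := le_abs_self _
        _ ≤ r₀ := by simpa [Real.dist_eq] using h3
  -- the optimal function
  set g : EuclideanSpace ℝ (Fin d) → ℝ := fun y => max (-1) (1 - ‖y‖) with hg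
  have hgb : ∀ y, |g y| ≤ 1 := by
    intro y
    rw [abs_le]
    constructor
    · exact le_max_left _ _
    · refine max_le (by norm_num) (by simp [norm_nonneg])
  have hgl : LipschitzWith 1 g := by
    refine LipschitzWith.of_dist_le_mul fun y z => ?_
    simp only [Real.dist_eq, dist_eq_norm, NNReal.coe_one, one_mul, hg]
    calc |max (-1) (1 - ‖y‖) - max (-1) (1 - ‖z‖)|
        = |max (1 - ‖y‖) (-1) - max (1 - ‖z‖) (-1)| := by rw [max_comm, max_comm (1-‖z‖)]
      _ ≤ |(1 - ‖y‖) - (1 - ‖z‖)| := abs_max_sub_max_le_abs _ _ _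
      _ = |‖z‖ - ‖y‖| := by ring_nf
      _ ≤ ‖z - y‖ := abs_norm_sub_norm_le _ _
      _ = ‖y - z‖ := norm_sub_rev _ _
  have hg0 : g 0 = 1 := by simp [hg]
  have hgi : ∀ i, g 0 - g (x i) = min 2 r₀ := by
    intro i
    rw [hg0]
    simp only [hg, hx i]
    rcases le_total r₀ 2 with h | h
    · rw [max_eq_right (by linarith), min_eq_right h]; ring
    · rw [max_eq_left (by linarith), min_eq_left h]; ring
  apply le_antisymm
  · apply Real.sSup_le
    · rintro r ⟨f, hb, hl, rfl⟩
      rw [key f hb hl]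
      calc ∑ i : Fin n, (f 0 - f (x i)) ≤ ∑ i : Fin n, min 2 r₀ :=
            Finset.sum_le_sum fun i _ => habs f hb hl i
        _ = n * min 2 r₀ := by simp [mul_comm]
    · have : (0:ℝ) < min 2 r₀ := lt_min (by norm_num) hr₀
      positivity
  · apply le_csSup
    · refine ⟨n * min 2 r₀, ?_⟩
      rintro r ⟨f, hb, hl, rfl⟩
      rw [key f hb hl]
      calc ∑ i : Fin n, (f 0 - f (x i)) ≤ ∑ i : Fin n, min 2 r₀ :=
            Finset.sum_le_sum fun i _ => habs f hb hl i
        _ = n * min 2 r₀ := by simp [mul_comm]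
    · refine ⟨g, hgb, hgl, ?_⟩
      rw [key g hgb hgl]
      simp [hgi, mul_comm]
end

section
/- The flat distance between two Dirac measures with masses c > 0 and b > 0 located at points x_0 and x_1 in R^d is ρ_F(c δ_{x_0}, b δ_{x_1}) = min{c,b}·min{2, |x_0−x_1|} + |c−b|. -/
open MeasureTheory

lemma lip_sub_const {X : Type*} [PseudoMetricSpace X] {g : X → ℝ} (hg : LipschitzWith 1 g)
    (a : ℝ) : LipschitzWith 1 (fun x => g x - a) := by
  refine LipschitzWith.of_dist_le_mul fun x y => ?_
  have := hg.dist_le_mul x y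
  simpa [Real.dist_eq, sub_sub_sub_cancel_right] using this

lemma lip_const_sub {X : Type*} [PseudoMetricSpace X] {g : X → ℝ} (hg : LipschitzWith 1 g)
    (a : ℝ) : LipschitzWith 1 (fun x => a - g x) := by
  refine LipschitzWith.of_dist_le_mul fun x y => ?_
  have := hg.dist_le_mul x y
  calc dist (a - g x) (a - g y) = |g x - g y| := by
        rw [Real.dist_eq]; ring_nf; rw [abs_sub_comm]; ring_nf
      _ ≤ 1 * dist x y := by simpa [Real.dist_eq] using this

theorem flatDist_weighted_dirac {d : ℕ} (c b : ℝ) (hc : 0 < c) (hb : 0 < b)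
    (x₀ x₁ : EuclideanSpace ℝ (Fin d)) :
    flatDist (ENNReal.ofReal c • Measure.dirac x₀) (ENNReal.ofReal b • Measure.dirac x₁) =
      min c b * min 2 (dist x₀ x₁) + |c - b| := by
  have hint : ∀ (f : EuclideanSpace ℝ (Fin d) → ℝ),
      (∫ x, f x ∂(ENNReal.ofReal c • Measure.dirac x₀))
        - (∫ x, f x ∂(ENNReal.ofReal b • Measure.dirac x₁)) = c * f x₀ - b * f x₁ := by
    intro f
    rw [integral_smul_measure, integral_smul_measure, integral_dirac, integral_dirac,
      ENNReal.toReal_ofReal hc.le, ENNReal.toReal_ofReal hb.le]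
    simp [smul_eq_mul]
  have hD0 : (0:ℝ) ≤ dist x₀ x₁ := dist_nonneg
  set D : ℝ := min 2 (dist x₀ x₁) with hDdef
  have hD2 : D ≤ 2 := min_le_left _ _
  have hDnn : 0 ≤ D := le_min (by norm_num) hD0
  apply IsGreatest.csSup_eq
  constructor
  · -- membership: an optimal f exists
    rcases le_total c b with hcb | hbc
    · refine ⟨fun x => max (-1) (min 1 (dist x x₁ - 1)), ?_, ?_, ?_⟩
      · intro x
        have h1 : -1 ≤ max (-1) (min 1 (dist x x₁ - 1)) := le_max_left _ _
        have h2 : max (-1) (min 1 (dist x x₁ - 1)) ≤ 1 :=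
          max_le (by norm_num) (min_le_left _ _)
        rw [abs_le]; exact ⟨h1, h2⟩
      · exact ((lip_sub_const (LipschitzWith.dist_left x₁) 1).const_min 1).const_max (-1)
      · rw [hint]
        have hfx₀ : max (-1) (min 1 (dist x₀ x₁ - 1)) = D - 1 := by
          rcases le_total (dist x₀ x₁) 2 with h | h
          · rw [min_eq_right (by linarith), max_eq_right (by linarith), hDdef, min_eq_right h]
          · rw [min_eq_left (by linarith), max_eq_right (by norm_num), hDdef, min_eq_left h]
            norm_num
        have hfx₁ : max (-1) (min 1 (dist x₁ x₁ - 1)) = -1 := by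
          simp
        rw [hfx₀, hfx₁, min_eq_left hcb, abs_of_nonpos (by linarith)]
        ring
    · refine ⟨fun x => max (-1) (min 1 (1 - dist x x₀)), ?_, ?_, ?_⟩
      · intro x
        have h1 : -1 ≤ max (-1) (min 1 (1 - dist x x₀)) := le_max_left _ _
        have h2 : max (-1) (min 1 (1 - dist x x₀)) ≤ 1 :=
          max_le (by norm_num) (min_le_left _ _)
        rw [abs_le]; exact ⟨h1, h2⟩
      · exact ((lip_const_sub (LipschitzWith.dist_left x₀) 1).const_min 1).const_max (-1)
      · rw [hint]
        have hfx₀ : max (-1) (min 1 (1 - dist x₀ x₀)) = 1 := by simp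
        have hfx₁ : max (-1) (min 1 (1 - dist x₁ x₀)) = 1 - D := by
          rw [dist_comm, min_eq_right (by linarith)]
          rcases le_total (dist x₀ x₁) 2 with h | h
          · rw [max_eq_right (by linarith), hDdef, min_eq_right h]
          · rw [max_eq_left (by linarith), hDdef, min_eq_left h]
            norm_num
        rw [hfx₀, hfx₁, min_eq_right hbc, abs_of_nonneg (by linarith)]
        ring
  · -- upper bound
    rintro r ⟨f, hbd, hlip, rfl⟩
    rw [hint]
    have huv : |f x₀ - f x₁| ≤ D := by
      refine le_min ?_ ?_
      · have h0 := abs_le.1 (hbd x₀); have h1 := abs_le.1 (hbd x₁)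
        rw [abs_le]; constructor <;> linarith
      · have := hlip.dist_le_mul x₀ x₁
        simpa [Real.dist_eq] using this
    have h0 := abs_le.1 (hbd x₀)
    have h1 := abs_le.1 (hbd x₁)
    have habs := abs_le.1 huv
    rcases le_total c b with hcb | hbc
    · rw [min_eq_left hcb, abs_of_nonpos (by linarith)]
      nlinarith [habs.2, h1.1, h1.2]
    · rw [min_eq_right hbc, abs_of_nonneg (by linarith)]
      nlinarith [habs.2, h0.1, h0.2]
end

section
/- Flat distance for one Dirac against a Dirac combination (Proposition of the paper): Let c > 0, let x_0, x_1, …, x_n ∈ R^d with distances d_i = |x_0 − x_i| ordered increasingly, let l ∈ {0,…,n} be such that d_i ≤ 2 for i ≤ l and d_i > 2 for i > l, and let b_1,…,b_n > 0. Set I* = max{ I ∈ {0,…,l} : Σ_{i=1}^I b_i ≤ c }. Then for μ = c δ_{x_0} and ν = Σ_{i=1}^n b_i δ_{x_i}, ρ_F(μ,ν) = Σ_{i=1}^{I*} b_i d_i + ( min{c, Σ_{i=1}^l b_i} − Σ_{i=1}^{I*} b_i ) d_{I*+1} + | c − Σ_{i=1}^l b_i | + Σ_{i=l+1}^n b_i.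 -/
/-!
A 1-Lipschitz `f` with `|f| ≤ 1` satisfies `f (x i) ≥ max (-1) (f x₀ - dist x₀ (x i))`. Writing
`b i = s i + (b i - s i)`, where `s i` is the mass transported from `x₀` to `x i`, this bounds
`∫ f d(μ - ν)` by the cost `planCost` of the plan `s`, while the test function
`max (-1) (t - dist x₀ ·)` attains `potentialGain t`. The greedy plan fills the atoms within
distance 2 in order of distance until the mass `c` is exhausted; its cost equals the potential
gain at `t = 1` when all of them are filled, and at `t = d_{I*+1} - 1` otherwise.
-/
open MeasureTheory

open Finset

section Dirac

variable {α ι : Type*} [MeasurableSpace α] [MeasurableSingletonClass α]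

theorem integral_smul_dirac_of_nonneg (f : α → ℝ) (a : α) {c : ℝ} (hc : 0 ≤ c) :
    ∫ y, f y ∂(ENNReal.ofReal c • Measure.dirac a) = c * f a := by
  rw [integral_smul_measure, integral_dirac, ENNReal.toReal_ofReal hc, smul_eq_mul]

theorem integral_sum_smul_dirac_of_nonneg [Fintype ι] (f : α → ℝ) (x : ι → α) {b : ι → ℝ}
    (hb : ∀ i, 0 ≤ b i) :
    ∫ y, f y ∂(∑ i, ENNReal.ofReal (b i) • Measure.dirac (x i)) = ∑ i, b i * f (x i) := by
  rw [integral_finsetSum_measure fun i _ =>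
    (integrable_dirac ENNReal.coe_lt_top).smul_measure ENNReal.ofReal_ne_top]
  exact sum_congr rfl fun i _ => integral_smul_dirac_of_nonneg f (x i) (hb i)

end Dirac

section Lipschitz

variable {E : Type*} [PseudoMetricSpace E]

theorem LipschitzWith.max_neg_one_sub_dist_le {f : E → ℝ} (hf : LipschitzWith 1 f)
    (hf₁ : ∀ y, |f y| ≤ 1) (x₀ y : E) : max (-1) (f x₀ - dist x₀ y) ≤ f y := by
  refine max_le (abs_le.1 (hf₁ y)).1 ?_
  have := hf.le_add_mul x₀ y
  simp only [NNReal.coe_one, one_mul] at this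
  linarith

theorem lipschitzWith_max_neg_one_sub_dist (t : ℝ) (x₀ : E) :
    LipschitzWith 1 fun y => max (-1) (t - dist x₀ y) :=
  (LipschitzWith.of_le_add fun a b => by linarith [dist_triangle x₀ a b]).const_max (-1)

theorem abs_max_neg_one_sub_dist_le {t : ℝ} (ht : t ≤ 1) (x₀ y : E) :
    |max (-1) (t - dist x₀ y)| ≤ 1 :=
  abs_le.2 ⟨le_max_left _ _, max_le (by norm_num) (by linarith [dist_nonneg (x := x₀) (y := y)])⟩

end Lipschitz

section Duality

variable {ι : Type*}

/-- Moving `s i` from `x₀` to the `i`-th atom costs `d i` per unit; all other mass of either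
measure is created or destroyed at unit cost. -/
def planCost (c : ℝ) (S : Finset ι) (b s d : ι → ℝ) : ℝ :=
  ∑ i ∈ S, s i * d i + (c - ∑ i ∈ S, s i) + ∑ i ∈ S, (b i - s i)

/-- `∫ g d(μ - ν)` for the test function `g = max (-1) (t - dist x₀ ·)`, when
`d i = dist x₀ (x i)`. -/
def potentialGain (c t : ℝ) (S : Finset ι) (b d : ι → ℝ) : ℝ :=
  c * t - ∑ i ∈ S, b i * max (-1) (t - d i)

theorem sub_sum_mul_le_planCost {c t : ℝ} {S : Finset ι} {b s d y : ι → ℝ}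
    (hs₀ : ∀ i ∈ S, 0 ≤ s i) (hsb : ∀ i ∈ S, s i ≤ b i) (hsc : ∑ i ∈ S, s i ≤ c) (ht : t ≤ 1)
    (hy : ∀ i ∈ S, max (-1) (t - d i) ≤ y i) :
    c * t - ∑ i ∈ S, b i * y i ≤ planCost c S b s d := by
  have hterm : ∀ i ∈ S, s i * (t - d i) - (b i - s i) ≤ b i * y i := fun i hi => by
    obtain ⟨hy₁, hy₂⟩ := max_le_iff.1 (hy i hi)
    nlinarith [hs₀ i hi, hsb i hi]
  calc c * t - ∑ i ∈ S, b i * y i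
      ≤ c * t - ∑ i ∈ S, (s i * (t - d i) - (b i - s i)) := by gcongr with i hi; exact hterm i hi
    _ = (c - ∑ i ∈ S, s i) * t + ∑ i ∈ S, s i * d i + ∑ i ∈ S, (b i - s i) := by
      simp only [mul_sub, sum_sub_distrib, ← sum_mul]; ring
    _ ≤ planCost c S b s d := by
      unfold planCost; nlinarith [mul_le_mul_of_nonneg_left ht (sub_nonneg.2 hsc)]

end Duality

theorem flatDist_eq_planCost_of_eq_potentialGain {ι : Type*} [Fintype ι] {d : ℕ}
    {c t : ℝ} (hc : 0 ≤ c) (x₀ : EuclideanSpace ℝ (Fin d)) (x : ι → EuclideanSpace ℝ (Fin d))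
    {b s : ι → ℝ} (hs₀ : ∀ i, 0 ≤ s i) (hsb : ∀ i, s i ≤ b i) (hsc : ∑ i, s i ≤ c)
    (ht : |t| ≤ 1)
    (heq : potentialGain c t univ b (fun i => dist x₀ (x i)) =
      planCost c univ b s (fun i => dist x₀ (x i))) :
    flatDist (ENNReal.ofReal c • Measure.dirac x₀)
        (∑ i, ENNReal.ofReal (b i) • Measure.dirac (x i)) =
      planCost c univ b s (fun i => dist x₀ (x i)) := by
  have hb : ∀ i, 0 ≤ b i := fun i => (hs₀ i).trans (hsb i)
  have hJ : ∀ f : EuclideanSpace ℝ (Fin d) → ℝ,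
      ∫ y, f y ∂(ENNReal.ofReal c • Measure.dirac x₀) -
        ∫ y, f y ∂(∑ i, ENNReal.ofReal (b i) • Measure.dirac (x i)) =
      c * f x₀ - ∑ i, b i * f (x i) := fun f => by
    rw [integral_smul_dirac_of_nonneg f x₀ hc, integral_sum_smul_dirac_of_nonneg f x hb]
  refine IsGreatest.csSup_eq ⟨⟨fun y => max (-1) (t - dist x₀ y),
    abs_max_neg_one_sub_dist_le (abs_le.1 ht).2 x₀, lipschitzWith_max_neg_one_sub_dist t x₀, ?_⟩,
    ?_⟩
  · rw [hJ, dist_self, sub_zero, max_eq_right (abs_le.1 ht).1, ← heq, potentialGain]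
  · rintro r ⟨f, hf₁, hf, rfl⟩
    rw [hJ]
    exact sub_sum_mul_le_planCost (fun i _ => hs₀ i) (fun i _ => hsb i) hsc (abs_le.1 (hf₁ x₀)).2
      fun i _ => hf.max_neg_one_sub_dist_le hf₁ x₀ (x i)

theorem Finset.sum_range_ite_lt {M : Type*} [AddCommMonoid M] {k n : ℕ} (hkn : k ≤ n)
    (f : ℕ → M) : ∑ i ∈ range n, (if i < k then f i else 0) = ∑ i ∈ range k, f i := by
  rw [← sum_filter]
  congr 1
  ext i
  simp only [mem_filter, mem_range]
  omega

theorem planCost_univ_fin (c : ℝ) (n : ℕ) (b s d : ℕ → ℝ) :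
    planCost c univ (fun i : Fin n => b i) (fun i => s i) (fun i => d i) =
      planCost c (range n) b s d := by
  simp only [planCost]
  rw [Fin.sum_univ_eq_sum_range (fun i => s i * d i), Fin.sum_univ_eq_sum_range s,
    Fin.sum_univ_eq_sum_range (fun i => b i - s i)]

theorem potentialGain_univ_fin (c t : ℝ) (n : ℕ) (b d : ℕ → ℝ) :
    potentialGain c t univ (fun i : Fin n => b i) (fun i => d i) =
      potentialGain c t (range n) b d := by
  rw [potentialGain, Fin.sum_univ_eq_sum_range (fun i => b i * max (-1) (t - d i))]
  rfl

theorem potentialGain_range_eq {c t : ℝ} {b d : ℕ → ℝ} {k n : ℕ} (hkn : k ≤ n)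
    (hnear : ∀ i < k, d i ≤ t + 1) (hfar : ∀ i, k ≤ i → i < n → t + 1 ≤ d i) :
    potentialGain c t (range n) b d =
      (c - ∑ i ∈ range k, b i) * t + ∑ i ∈ range k, b i * d i + ∑ i ∈ Ico k n, b i := by
  have hnear' : ∑ i ∈ range k, b i * max (-1) (t - d i) = ∑ i ∈ range k, (b i * t - b i * d i) :=
    sum_congr rfl fun i hi => by
      rw [max_eq_right (by linarith [hnear i (mem_range.1 hi)])]; ring
  have hfar' : ∑ i ∈ Ico k n, b i * max (-1) (t - d i) = ∑ i ∈ Ico k n, -b i :=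
    sum_congr rfl fun i hi => by
      obtain ⟨hki, hin⟩ := mem_Ico.1 hi
      rw [max_eq_left (by linarith [hfar i hki hin])]; ring
  rw [potentialGain, ← sum_range_add_sum_Ico _ hkn, hnear', hfar', sum_sub_distrib, ← sum_mul,
    sum_neg_distrib]
  ring

section Fin

variable {n d : ℕ} {c : ℝ} {x₀ : EuclideanSpace ℝ (Fin d)} {x : Fin n → EuclideanSpace ℝ (Fin d)}
  {b dd : ℕ → ℝ}

theorem flatDist_eq_planCost_range (hc : 0 ≤ c) (hdd : ∀ i : Fin n, dd i = dist x₀ (x i))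
    {s : ℕ → ℝ} (hs₀ : ∀ i < n, 0 ≤ s i) (hsb : ∀ i < n, s i ≤ b i)
    (hsc : ∑ i ∈ range n, s i ≤ c) {t : ℝ} (ht : |t| ≤ 1)
    (heq : potentialGain c t (range n) b dd = planCost c (range n) b s dd) :
    flatDist (ENNReal.ofReal c • Measure.dirac x₀)
        (∑ i : Fin n, ENNReal.ofReal (b i) • Measure.dirac (x i)) =
      planCost c (range n) b s dd := by
  have hdist : (fun i : Fin n => dist x₀ (x i)) = fun i : Fin n => dd i :=
    funext fun i => (hdd i).symm
  rw [← planCost_univ_fin, ← hdist]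
  refine flatDist_eq_planCost_of_eq_potentialGain hc x₀ x (fun i => hs₀ i i.2)
    (fun i => hsb i i.2) (by rwa [Fin.sum_univ_eq_sum_range]) ht ?_
  rw [hdist, planCost_univ_fin, potentialGain_univ_fin, heq]

theorem flatDist_eq_of_sum_le (hc : 0 ≤ c) (hdd : ∀ i : Fin n, dd i = dist x₀ (x i))
    (hb : ∀ i < n, 0 ≤ b i) {l : ℕ} (hln : l ≤ n) (hnear : ∀ i < l, dd i ≤ 2)
    (hfar : ∀ i, l ≤ i → i < n → 2 ≤ dd i) (hmass : ∑ i ∈ range l, b i ≤ c) :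
    flatDist (ENNReal.ofReal c • Measure.dirac x₀)
        (∑ i : Fin n, ENNReal.ofReal (b i) • Measure.dirac (x i)) =
      ∑ i ∈ range l, b i * dd i + (c - ∑ i ∈ range l, b i) + ∑ i ∈ Ico l n, b i := by
  have hcost : planCost c (range n) b (fun i => if i < l then b i else 0) dd =
      ∑ i ∈ range l, b i * dd i + (c - ∑ i ∈ range l, b i) + ∑ i ∈ Ico l n, b i := by
    simp only [planCost, ite_mul, zero_mul, sum_sub_distrib, sum_range_ite_lt hln,
      ← sum_range_add_sum_Ico b hln]
    ring
  rw [← hcost]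
  refine flatDist_eq_planCost_range hc hdd (t := 1) (fun i hi => by split_ifs <;> simp [hb i hi])
    (fun i hi => by split_ifs <;> simp [hb i hi]) (by rwa [sum_range_ite_lt hln]) (by norm_num) ?_
  rw [hcost, potentialGain_range_eq hln (fun i hi => by linarith [hnear i hi])
    (fun i hli hi => by linarith [hfar i hli hi])]
  ring

theorem flatDist_eq_of_sum_le_of_le_sum_succ (hc : 0 ≤ c)
    (hdd : ∀ i : Fin n, dd i = dist x₀ (x i)) (hb : ∀ i < n, 0 ≤ b i) {k : ℕ} (hkn : k < n)
    (hbelow : ∀ i < k, dd i ≤ dd k) (habove : ∀ i, k ≤ i → i < n → dd k ≤ dd i)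
    (hdk : dd k ≤ 2) (hle : ∑ i ∈ range k, b i ≤ c) (hle' : c ≤ ∑ i ∈ range (k + 1), b i) :
    flatDist (ENNReal.ofReal c • Measure.dirac x₀)
        (∑ i : Fin n, ENNReal.ofReal (b i) • Measure.dirac (x i)) =
      ∑ i ∈ range k, b i * dd i + (c - ∑ i ∈ range k, b i) * dd k +
        (∑ i ∈ range n, b i - c) := by
  set r := c - ∑ i ∈ range k, b i
  set s : ℕ → ℝ := fun i => if i < k then b i else if i = k then r else 0
  have hsum : ∀ g : ℕ → ℝ, ∑ i ∈ range n, s i * g i = ∑ i ∈ range k, b i * g i + r * g k := by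
    intro g
    have hsplit : ∀ i,
        s i * g i = (if i < k then b i * g i else 0) + (if i = k then r * g i else 0) := by
      intro i; simp only [s]; split_ifs <;> first | omega | ring
    rw [sum_congr rfl fun i _ => hsplit i, sum_add_distrib, sum_range_ite_lt hkn.le,
      sum_ite_eq' (range n) k, if_pos (mem_range.2 hkn)]
  have hsum₁ : ∑ i ∈ range n, s i = ∑ i ∈ range k, b i + r := by
    simpa using hsum 1
  have hcost : planCost c (range n) b s dd =
      ∑ i ∈ range k, b i * dd i + r * dd k + (∑ i ∈ range n, b i - c) := by
    rw [planCost, hsum, sum_sub_distrib, hsum₁]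
    ring
  rw [← hcost]
  have hdk₀ : 0 ≤ dd k := hdd ⟨k, hkn⟩ ▸ dist_nonneg
  refine flatDist_eq_planCost_range hc hdd (t := dd k - 1) (fun i hi => ?_) (fun i hi => ?_)
    (by rw [hsum₁]; linarith) (abs_le.2 ⟨by linarith, by linarith⟩) ?_
  · simp only [s]; split_ifs <;> first | exact hb i hi | linarith
  · simp only [s]; split_ifs with h₁ h₂
    · rfl
    · subst h₂; rw [sum_range_succ] at hle'; linarith
    · exact hb i hi
  · rw [hcost, potentialGain_range_eq hkn.le (fun i hi => by linarith [hbelow i hi])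
      (fun i hki hi => by linarith [habove i hki hi]), ← sum_range_add_sum_Ico b hkn.le]
    ring

end Fin

/-- Indexing is 0-based: the paper's `x_i, b_i, d_i` are `x (i-1), bb (i-1), dd (i-1)`, so the
paper's `d_{I*+1}` is `dd Istar`. -/
theorem flatDist_dirac_vs_combination {d n : ℕ} (c : ℝ) (hc : 0 < c)
    (x₀ : EuclideanSpace ℝ (Fin d)) (x : Fin n → EuclideanSpace ℝ (Fin d))
    (dd bb : ℕ → ℝ)
    (hdd : ∀ i : Fin n, dd i = dist x₀ (x i))
    (hmono : ∀ i j : Fin n, (i : ℕ) ≤ j → dd i ≤ dd j)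
    (hb : ∀ i : Fin n, 0 < bb i)
    (l : ℕ) (hln : l ≤ n)
    (hl₁ : ∀ i : Fin n, (i : ℕ) < l → dd i ≤ 2)
    (hl₂ : ∀ i : Fin n, l ≤ (i : ℕ) → 2 < dd i)
    (Istar : ℕ) (hIl : Istar ≤ l)
    (hIle : ∑ i ∈ Finset.range Istar, bb i ≤ c)
    (hImax : ∀ I, I ≤ l → ∑ i ∈ Finset.range I, bb i ≤ c → I ≤ Istar) :
    flatDist (ENNReal.ofReal c • Measure.dirac x₀)
        (∑ i : Fin n, ENNReal.ofReal (bb (i : ℕ)) • Measure.dirac (x i)) =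
      ∑ i ∈ Finset.range Istar, bb i * dd i +
        (min c (∑ i ∈ Finset.range l, bb i) - ∑ i ∈ Finset.range Istar, bb i) * dd Istar +
        |c - ∑ i ∈ Finset.range l, bb i| + ∑ i ∈ Finset.Ico l n, bb i := by
  have hb' : ∀ i < n, 0 ≤ bb i := fun i hi => (hb ⟨i, hi⟩).le
  rcases le_or_gt (∑ i ∈ range l, bb i) c with hmass | hmass
  · obtain rfl : Istar = l := le_antisymm hIl (hImax l le_rfl hmass)
    rw [flatDist_eq_of_sum_le hc.le hdd hb' hln (fun i hi => hl₁ ⟨i, hi.trans_le hln⟩ hi)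
      (fun i hli hi => (hl₂ ⟨i, hi⟩ hli).le) hmass, min_eq_right hmass,
      abs_of_nonneg (sub_nonneg.2 hmass)]
    ring
  · have hIlt : Istar < l := hIl.lt_of_ne (by rintro rfl; linarith)
    have hIn : Istar < n := hIlt.trans_le hln
    have hnext : c ≤ ∑ i ∈ range (Istar + 1), bb i := by
      by_contra! h
      have := hImax _ hIlt h.le
      omega
    rw [flatDist_eq_of_sum_le_of_le_sum_succ hc.le hdd hb' hIn
      (fun i hi => hmono ⟨i, hi.trans hIn⟩ ⟨Istar, hIn⟩ hi.le)
      (fun i hki hi => hmono ⟨Istar, hIn⟩ ⟨i, hi⟩ hki) (hl₁ ⟨Istar, hIn⟩ hIlt) hIle hnext,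
      min_eq_left hmass.le, abs_of_neg (sub_neg.2 hmass), ← sum_range_add_sum_Ico bb hln]
    ring
end

section
/- Optimality of the greedy transport plan via variational inequality: let c > 0, d_1 ≤ … ≤ d_n be nonnegative reals, l such that d_i ≤ 2 for i ≤ l and d_i > 2 for i > l, b_i > 0, and define F(α, β) = c + Σ b_i − 2α + Σ β_i d_i on X = { (α, β) ∈ [0,c] × Π_i [0, b_i] : α = Σ β_i }. Set α* = min{c, Σ_{i=1}^l b_i}, I* = max{ I ≤ l : Σ_{i=1}^I b_i ≤ c }, and β*_i = b_i for i ≤ I*, β*_{I*+1} = α* − Σ_{i=1}^{I*} b_i, β*_i = 0 otherwise. Then (α*, β*) is a global minimum of F on X. -/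
/-!
Substituting `α = Σ β_i`, `F = c + Σ b_i + Σ β_i (d_i - 2)`: a fractional knapsack with capacity
`c` and sorted costs `d_i - 2`, which the greedy plan solves. Optimality is certified by a
Lagrange multiplier `θ ≤ 0` for the capacity constraint (`θ = d_{I*} - 2` if `I* < l`, else
`θ = 0`): `β*` is full where the cost is below `θ`, empty where it is above, and uses the whole
capacity when `θ < 0`. Then `Σ (β*_i - β_i)(d_i - 2 - θ) ≤ 0` termwise and
`θ (Σ β*_i - Σ β_i) ≤ 0`, which add up to `F(α*, β*) ≤ F(α, β)`.
-/

open Finset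

theorem sum_mul_le_sum_mul_of_threshold {ι : Type*} [Fintype ι] {e b βs β : ι → ℝ} {c θ : ℝ}
    (hθ : θ ≤ 0) (hfull : ∀ i, e i < θ → βs i = b i) (hempty : ∀ i, θ < e i → βs i = 0)
    (hsat : θ < 0 → c ≤ ∑ i, βs i) (hβ : ∀ i, 0 ≤ β i ∧ β i ≤ b i) (hβc : ∑ i, β i ≤ c) :
    ∑ i, βs i * e i ≤ ∑ i, β i * e i := by
  have hterm : ∀ i, (βs i - β i) * (e i - θ) ≤ 0 := by
    intro i
    rcases lt_trichotomy (e i) θ with h | h | h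
    · rw [hfull i h]
      exact mul_nonpos_of_nonneg_of_nonpos (by linarith [hβ i]) (by linarith)
    · simp [h]
    · rw [hempty i h]
      exact mul_nonpos_of_nonpos_of_nonneg (by linarith [hβ i]) (by linarith)
  have hmass : θ * (∑ i, βs i - ∑ i, β i) ≤ 0 := by
    rcases hθ.lt_or_eq with h | h
    · exact mul_nonpos_of_nonpos_of_nonneg h.le (by linarith [hsat h])
    · simp [h]
  have hsplit : ∑ i, (βs i - β i) * (e i - θ)
      = ∑ i, βs i * e i - ∑ i, β i * e i - θ * (∑ i, βs i - ∑ i, β i) := by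
    simp only [mul_sub, sub_mul, sum_sub_distrib, ← sum_mul]
    ring
  linarith [sum_nonpos fun i (_ : i ∈ univ) => hterm i]

theorem sum_range_mono_of_nonneg {b : ℕ → ℝ} {j k : ℕ} (hb : ∀ i < k, 0 ≤ b i) (hjk : j ≤ k) :
    ∑ i ∈ range j, b i ≤ ∑ i ∈ range k, b i :=
  sum_le_sum_of_subset_of_nonneg (range_subset_range.2 hjk) fun i hi _ => hb i (mem_range.1 hi)

theorem lt_sum_range_succ_of_maximal {b : ℕ → ℝ} {c : ℝ} {I l : ℕ} (hIl : I < l)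
    (hImax : ∀ J, J ≤ l → ∑ i ∈ range J, b i ≤ c → J ≤ I) :
    c < ∑ i ∈ range (I + 1), b i := by
  by_contra h
  have := hImax (I + 1) hIl (not_lt.1 h)
  omega

theorem sub_sum_range_lt_of_maximal {b : ℕ → ℝ} {c : ℝ} {I l : ℕ} (hIl : I < l)
    (hImax : ∀ J, J ≤ l → ∑ i ∈ range J, b i ≤ c → J ≤ I) :
    c - ∑ i ∈ range I, b i < b I := by
  linarith [sum_range_succ b I ▸ lt_sum_range_succ_of_maximal hIl hImax]

theorem min_sum_range_eq_left_of_maximal {b : ℕ → ℝ} {c : ℝ} {I l : ℕ}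
    (hb : ∀ i < l, 0 ≤ b i) (hIl : I < l)
    (hImax : ∀ J, J ≤ l → ∑ i ∈ range J, b i ≤ c → J ≤ I) :
    min c (∑ i ∈ range l, b i) = c :=
  min_eq_left ((lt_sum_range_succ_of_maximal hIl hImax).trans_le
    (sum_range_mono_of_nonneg hb hIl)).le

def greedyFill (b : ℕ → ℝ) (I : ℕ) (r : ℝ) (i : ℕ) : ℝ :=
  if i < I then b i else if i = I then r else 0

section greedyFill

variable {b : ℕ → ℝ} {I i : ℕ} {r : ℝ}

theorem greedyFill_of_lt (h : i < I) : greedyFill b I r i = b i := if_pos h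

theorem greedyFill_self : greedyFill b I r I = r := by simp [greedyFill]

theorem greedyFill_of_gt (h : I < i) : greedyFill b I r i = 0 := by
  simp [greedyFill, h.ne', h.not_gt]

theorem sum_range_greedyFill {n : ℕ} (hI : I ≤ n) (hr : r = 0 ∨ I < n) :
    ∑ i ∈ range n, greedyFill b I r i = ∑ i ∈ range I, b i + r := by
  rw [← sum_range_add_sum_Ico _ hI]
  congr 1
  · exact sum_congr rfl fun i hi => greedyFill_of_lt (mem_range.1 hi)
  · have : ∀ i ∈ Ico I n, greedyFill b I r i = if i = I then r else 0 := fun i hi =>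
      if_neg (mem_Ico.1 hi).1.not_gt
    rw [sum_congr rfl this, sum_ite_eq']
    rcases hr with rfl | h
    · simp
    · simp [h]

theorem greedyFill_mem_Icc {n : ℕ} (hb : ∀ i < n, 0 ≤ b i) (hr : 0 ≤ r)
    (hrb : I < n → r ≤ b I) (hi : i < n) :
    0 ≤ greedyFill b I r i ∧ greedyFill b I r i ≤ b i := by
  rcases lt_trichotomy i I with h | rfl | h
  · rw [greedyFill_of_lt h]
    exact ⟨hb i hi, le_rfl⟩
  · rw [greedyFill_self]
    exact ⟨hr, hrb hi⟩
  · rw [greedyFill_of_gt h]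
    exact ⟨le_rfl, hb i hi⟩

theorem exists_threshold_greedyFill {n l : ℕ} {d : ℕ → ℝ}
    (hmono : ∀ i j : Fin n, (i : ℕ) ≤ j → d i ≤ d j)
    (hl₁ : ∀ i : Fin n, (i : ℕ) < l → d i ≤ 2)
    (hl₂ : ∀ i : Fin n, l ≤ (i : ℕ) → 2 < d i)
    (hIl : I ≤ l) (hln : l ≤ n) (hr : I = l → r = 0) :
    ∃ θ ≤ 0, (θ < 0 → I < l) ∧
      (∀ i : Fin n, d i - 2 < θ → greedyFill b I r i = b i) ∧
      (∀ i : Fin n, θ < d i - 2 → greedyFill b I r i = 0) := by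
  rcases hIl.lt_or_eq with hIl | rfl
  · let iI : Fin n := ⟨I, by omega⟩
    refine ⟨d I - 2, by linarith [hl₁ iI hIl], fun _ => hIl, fun i hi => ?_, fun i hi => ?_⟩
    · refine greedyFill_of_lt (not_le.1 fun h => ?_)
      linarith [hmono iI i h]
    · refine greedyFill_of_gt (not_le.1 fun h => ?_)
      linarith [hmono i iI h]
  · refine ⟨0, le_rfl, fun h => absurd h (lt_irrefl 0), fun i hi => ?_, fun i hi => ?_⟩
    · refine greedyFill_of_lt (not_le.1 fun h => ?_)
      linarith [hl₂ i h]
    · have hIi : I ≤ i := not_lt.1 fun h => by linarith [hl₁ i h]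
      rcases hIi.lt_or_eq with h | h
      · exact greedyFill_of_gt h
      · rw [← h, greedyFill_self, hr rfl]

end greedyFill

theorem greedy_plan_global_min_general {n : ℕ} (c : ℝ)
    (dd bb : ℕ → ℝ)
    (hmono : ∀ i j : Fin n, (i : ℕ) ≤ j → dd i ≤ dd j)
    (hb : ∀ i : Fin n, 0 < bb i)
    (l : ℕ) (hln : l ≤ n)
    (hl₁ : ∀ i : Fin n, (i : ℕ) < l → dd i ≤ 2)
    (hl₂ : ∀ i : Fin n, l ≤ (i : ℕ) → 2 < dd i)
    (Istar : ℕ) (hIl : Istar ≤ l)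
    (hIle : ∑ i ∈ Finset.range Istar, bb i ≤ c)
    (hImax : ∀ I, I ≤ l → ∑ i ∈ Finset.range I, bb i ≤ c → I ≤ Istar)
    (αstar : ℝ) (hαs : αstar = min c (∑ i ∈ Finset.range l, bb i))
    (βstar : Fin n → ℝ)
    (hβs : ∀ i : Fin n, βstar i =
      if (i : ℕ) < Istar then bb i
      else if (i : ℕ) = Istar then αstar - ∑ j ∈ Finset.range Istar, bb j
      else 0) :
    (0 ≤ αstar ∧ αstar ≤ c ∧ (∀ i : Fin n, 0 ≤ βstar i ∧ βstar i ≤ bb i) ∧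
      αstar = ∑ i, βstar i) ∧
    ∀ (α : ℝ) (β : Fin n → ℝ), 0 ≤ α → α ≤ c →
      (∀ i : Fin n, 0 ≤ β i ∧ β i ≤ bb i) → α = ∑ i, β i →
      c + ∑ i ∈ Finset.range n, bb i - 2 * αstar + ∑ i : Fin n, βstar i * dd i ≤
        c + ∑ i ∈ Finset.range n, bb i - 2 * α + ∑ i : Fin n, β i * dd i := by
  set S := ∑ i ∈ range Istar, bb i
  have hbnn : ∀ i < n, 0 ≤ bb i := fun i hi => (hb ⟨i, hi⟩).le
  have hbl : ∀ i < l, 0 ≤ bb i := fun i hi => hbnn i (hi.trans_le hln)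
  have hSα : S ≤ αstar := hαs ▸ le_min hIle (sum_range_mono_of_nonneg hbl hIl)
  have hsat : Istar < l → αstar = c := fun h =>
    hαs ▸ min_sum_range_eq_left_of_maximal hbl h hImax
  have hfill : Istar = l → αstar - S = 0 := fun h => by
    subst h; rw [hαs, min_eq_right hIle, sub_self]
  have hβg : ∀ i : Fin n, βstar i = greedyFill bb Istar (αstar - S) i := hβs
  have hsum : αstar = ∑ i, βstar i := by
    rw [sum_congr rfl fun i _ => hβg i,
      Fin.sum_univ_eq_sum_range (greedyFill bb Istar (αstar - S)),
      sum_range_greedyFill (hIl.trans hln) (hIl.lt_or_eq.imp (·.trans_le hln) hfill).symm,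
      add_sub_cancel]
  have hrem : Istar < n → αstar - S ≤ bb Istar := fun hn => by
    rcases hIl.lt_or_eq with h | h
    · exact hsat h ▸ (sub_sum_range_lt_of_maximal h hImax).le
    · exact hfill h ▸ hbnn _ hn
  have hβfeas : ∀ i : Fin n, 0 ≤ βstar i ∧ βstar i ≤ bb i := fun i =>
    hβg i ▸ greedyFill_mem_Icc hbnn (sub_nonneg.2 hSα) hrem i.isLt
  have hα0 : 0 ≤ αstar :=
    (sum_nonneg fun i hi => hbl i ((mem_range.1 hi).trans_le hIl)).trans hSα
  refine ⟨⟨hα0, hαs ▸ min_le_left _ _, hβfeas, hsum⟩, fun α β _ hαc hβ hαβ => ?_⟩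
  obtain ⟨θ, hθ, hθl, hfull, hempty⟩ := exists_threshold_greedyFill (b := bb) (r := αstar - S)
    hmono hl₁ hl₂ hIl hln hfill
  have key := sum_mul_le_sum_mul_of_threshold (e := fun i : Fin n => dd i - 2) (c := c) hθ
    (fun i h => (hβg i).trans (hfull i h)) (fun i h => (hβg i).trans (hempty i h))
    (fun h => hsum ▸ (hsat (hθl h)).ge) hβ (hαβ ▸ hαc)
  simp only [mul_sub, sum_sub_distrib, ← sum_mul, ← hsum, ← hαβ] at key
  linarith

/-- The greedy transport plan `(α*, β*)` is feasible and globally minimizes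
`F(α,β) = c + Σ b_i − 2α + Σ β_i d_i` on
`X = {(α,β) ∈ [0,c] × Π [0,b_i] : α = Σ β_i}` (0-based indexing). -/
theorem greedy_plan_global_min {n : ℕ} (c : ℝ) (hc : 0 < c)
    (dd bb : ℕ → ℝ)
    (hd0 : ∀ i : Fin n, 0 ≤ dd i)
    (hmono : ∀ i j : Fin n, (i : ℕ) ≤ j → dd i ≤ dd j)
    (hb : ∀ i : Fin n, 0 < bb i)
    (l : ℕ) (hln : l ≤ n)
    (hl₁ : ∀ i : Fin n, (i : ℕ) < l → dd i ≤ 2)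
    (hl₂ : ∀ i : Fin n, l ≤ (i : ℕ) → 2 < dd i)
    (Istar : ℕ) (hIl : Istar ≤ l)
    (hIle : ∑ i ∈ Finset.range Istar, bb i ≤ c)
    (hImax : ∀ I, I ≤ l → ∑ i ∈ Finset.range I, bb i ≤ c → I ≤ Istar)
    (αstar : ℝ) (hαs : αstar = min c (∑ i ∈ Finset.range l, bb i))
    (βstar : Fin n → ℝ)
    (hβs : ∀ i : Fin n, βstar i =
      if (i : ℕ) < Istar then bb i
      else if (i : ℕ) = Istar then αstar - ∑ j ∈ Finset.range Istar, bb j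
      else 0) :
    (0 ≤ αstar ∧ αstar ≤ c ∧ (∀ i : Fin n, 0 ≤ βstar i ∧ βstar i ≤ bb i) ∧
      αstar = ∑ i, βstar i) ∧
    ∀ (α : ℝ) (β : Fin n → ℝ), 0 ≤ α → α ≤ c →
      (∀ i : Fin n, 0 ≤ β i ∧ β i ≤ bb i) → α = ∑ i, β i →
      c + ∑ i ∈ Finset.range n, bb i - 2 * αstar + ∑ i : Fin n, βstar i * dd i ≤
        c + ∑ i ∈ Finset.range n, bb i - 2 * α + ∑ i : Fin n, β i * dd i :=
  greedy_plan_global_min_general c dd bb hmono hb l hln hl₁ hl₂ Istar hIl hIle hImax αstar hαs βstar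
    hβs
end
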